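/- arXiv:1804.07179 — 2 statements merged into one kernel-verified Lean document; each statement's English description precedes it below -/
import Mathlib

section
/- If x is weakly Pareto optimal for f = (f_1,…,f_m), then there exists a weight vector w ∈ Δ^{m-1} (nonnegative entries summing to 1) such that x minimizes the weighted Chebyshev scalarization f_w(y) = max_i w_i (f_i(y) − z_i) over X, where z_i = inf_{y∈X} f_i(y), assuming each f_i is bounded below on X. -/
/-- Weighted Chebyshev scalarization `f_w(x) = max_i w_i (f_i(x) − z_i)`. -/
noncomputable def chebyshevScal {X : Type*} {m : ℕ} (w z : Fin m → ℝ)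
    (f : X → Fin m → ℝ) (x : X) : ℝ :=
  ⨆ i, w i * (f x i - z i)

theorem weakPareto_is_chebyshev_minimizer {X : Type*} [Nonempty X] {m : ℕ}
    (hm : 0 < m) (f : X → Fin m → ℝ)
    (hbdd : ∀ i, BddBelow (Set.range fun y => f y i))
    (x : X) (hx : ∀ y : X, ∃ i, f x i ≤ f y i) :
    ∃ w : Fin m → ℝ, (∀ i, 0 ≤ w i) ∧ (∑ i, w i) = 1 ∧
      ∀ y : X, chebyshevScal w (fun i => ⨅ y' : X, f y' i) f x ≤
        chebyshevScal w (fun i => ⨅ y' : X, f y' i) f y := by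
  haveI : NeZero m := ⟨hm.ne'⟩
  simp only [chebyshevScal]
  set z : Fin m → ℝ := fun i => ⨅ y' : X, f y' i with hzdef
  have hz : ∀ (i : Fin m) (y : X), z i ≤ f y i := fun i y => ciInf_le (hbdd i) y
  set a : Fin m → ℝ := fun i => f x i - z i with hadef
  have ha0 : ∀ i, 0 ≤ a i := fun i => sub_nonneg.mpr (hz i x)
  have hbdA : ∀ (w : Fin m → ℝ) (y : X),
      BddAbove (Set.range fun i => w i * (f y i - z i)) :=
    fun w y => (Set.finite_range _).bddAbove
  by_cases hex : ∃ i0, a i0 = 0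
  · obtain ⟨i0, hi0⟩ := hex
    refine ⟨fun j => if j = i0 then 1 else 0, fun j => by positivity, by simp, fun y => ?_⟩
    have h1 : (⨆ i, (if i = i0 then (1:ℝ) else 0) * (f x i - z i)) ≤ 0 := by
      apply ciSup_le
      intro j
      rcases eq_or_ne j i0 with rfl | hj
      · have : f x j - z j = 0 := hi0
        simp [this]
      · simp [hj]
    refine h1.trans ?_
    have h2 : (0:ℝ) ≤ (if i0 = i0 then (1:ℝ) else 0) * (f y i0 - z i0) := by
      simp [sub_nonneg.mpr (hz i0 y)]
    refine h2.trans ?_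
    exact le_ciSup (f := fun j => (if j = i0 then (1:ℝ) else 0) * (f y j - z j)) ((Set.finite_range _).bddAbove) i0
  · push_neg at hex
    have hpos : ∀ i, 0 < a i := fun i => (ha0 i).lt_of_ne (Ne.symm (hex i))
    set S : ℝ := ∑ j, (a j)⁻¹ with hSdef
    have hSpos : 0 < S := by
      apply Finset.sum_pos (fun j _ => inv_pos.mpr (hpos j))
      exact Finset.univ_nonempty
    refine ⟨fun i => (a i)⁻¹ / S,
      fun i => div_nonneg (inv_nonneg.mpr (ha0 i)) hSpos.le, ?_, fun y => ?_⟩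
    · rw [← Finset.sum_div, ← hSdef, div_self hSpos.ne']
    · have hwi : ∀ i, ((a i)⁻¹ / S) * a i = 1 / S := by
        intro i
        rw [div_mul_eq_mul_div, inv_mul_cancel₀ (hpos i).ne']
      have h1 : (⨆ i, ((a i)⁻¹ / S) * (f x i - z i)) ≤ 1 / S :=
        ciSup_le fun i => (hwi i).le
      refine h1.trans ?_
      obtain ⟨i, hi⟩ := hx y
      have h2 : 1 / S ≤ ((a i)⁻¹ / S) * (f y i - z i) := by
        rw [← hwi i]
        exact mul_le_mul_of_nonneg_left (by simpa [hadef] using sub_le_sub_right hi (z i))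
          (div_nonneg (inv_nonneg.mpr (ha0 i)) hSpos.le)
      refine h2.trans ?_
      exact le_ciSup (f := fun j => (a j)⁻¹ / S * (f y j - z j)) ((Set.finite_range _).bddAbove) i
end

section
/- For distinct points c_1, …, c_m in ℝ^n and objectives f_i(x) = ‖x − c_i‖², every point of the convex hull of {c_1, …, c_m} is weakly Pareto optimal. -/
open RealInnerProductSpace

/-!
The quadratic terms cancel in `‖y - z‖² - ‖x - z‖²`, so the points strictly closer to `y` than
to `x` form an open half-space. If `y` beat `x` at every generator, that half-space would contain
the generators, hence their convex hull, hence `x`; but `x` is not strictly closer to `y` than to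
itself.
-/

section

variable {E : Type*} [NormedAddCommGroup E] [InnerProductSpace ℝ E]

theorem norm_sub_sq_sub_norm_sub_sq (x y z : E) :
    ‖y - z‖ ^ 2 - ‖x - z‖ ^ 2 = ‖y‖ ^ 2 - ‖x‖ ^ 2 - 2 * ⟪y - x, z⟫ := by
  rw [norm_sub_sq_real, norm_sub_sq_real, inner_sub_left]
  ring

theorem convex_setOf_norm_sub_sq_lt (x y : E) :
    Convex ℝ {z : E | ‖y - z‖ ^ 2 < ‖x - z‖ ^ 2} := by
  have hlin : IsLinearMap ℝ (fun z : E => 2 * ⟪y - x, z⟫) :=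
    ⟨fun a b => by rw [inner_add_right]; ring,
      fun r a => by rw [real_inner_smul_right, smul_eq_mul]; ring⟩
  convert convex_halfSpace_gt hlin (‖y‖ ^ 2 - ‖x‖ ^ 2) using 1
  ext z
  simp only [Set.mem_ofPred_eq, ← sub_neg (a := ‖y - z‖ ^ 2), norm_sub_sq_sub_norm_sub_sq]
  constructor <;> intro h <;> linarith

theorem exists_norm_sub_sq_le_of_mem_convexHull {s : Set E} {x : E}
    (hx : x ∈ convexHull ℝ s) (y : E) : ∃ a ∈ s, ‖x - a‖ ^ 2 ≤ ‖y - a‖ ^ 2 := by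
  by_contra! h
  have hxy : ‖y - x‖ ^ 2 < ‖x - x‖ ^ 2 :=
    convexHull_min (fun a ha => h a ha) (convex_setOf_norm_sub_sq_lt x y) hx
  rw [sub_self, norm_zero, zero_pow two_ne_zero] at hxy
  exact (sq_nonneg _).not_gt hxy

end

theorem convexHull_subset_weakPareto_general {n m : ℕ}
    (c : Fin m → EuclideanSpace ℝ (Fin n))
    (x : EuclideanSpace ℝ (Fin n)) (hx : x ∈ convexHull ℝ (Set.range c)) :
    ∀ y : EuclideanSpace ℝ (Fin n), ∃ i, ‖x - c i‖ ^ 2 ≤ ‖y - c i‖ ^ 2 := by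
  intro y
  obtain ⟨_, ⟨i, rfl⟩, hi⟩ := exists_norm_sub_sq_le_of_mem_convexHull hx y
  exact ⟨i, hi⟩

theorem convexHull_subset_weakPareto {n m : ℕ}
    (c : Fin m → EuclideanSpace ℝ (Fin n)) (hc : Function.Injective c)
    (x : EuclideanSpace ℝ (Fin n)) (hx : x ∈ convexHull ℝ (Set.range c)) :
    ∀ y : EuclideanSpace ℝ (Fin n), ∃ i, ‖x - c i‖ ^ 2 ≤ ‖y - c i‖ ^ 2 :=
  convexHull_subset_weakPareto_general c x hx
end
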